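/- Let $h$ be a holomorphic function on an open neighborhood of the closed unit disc in $\mathbb{C}$. If $w\,h(w)$ is real-valued for every $w$ on the unit circle, then $h \equiv 0$ on the closed unit disc. -/

import Mathlib

/-!
Put `g w = w * h w`. Since `‖exp (-I * g)‖ = exp (Im g)`, the maximum modulus principle applied to
`exp (∓ I * g)` shows that `Im g`, which vanishes on the unit circle, vanishes on the whole disc.
A holomorphic function with real values on a connected open set is constant, since its image
cannot be open; hence `g = g 0 = 0` on the disc, so `h = 0` off the origin, and everywhere by
continuity.
-/

open Metric Set Filter Topology

namespace DiffContOnCl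

variable {f : ℂ → ℂ} {U : Set ℂ}

theorem im_le_of_forall_mem_frontier_im_le (hU : Bornology.IsBounded U)
    (hf : DiffContOnCl ℂ f U) {C : ℝ} (hC : ∀ z ∈ frontier U, (f z).im ≤ C) {z : ℂ}
    (hz : z ∈ closure U) : (f z).im ≤ C := by
  have norm_exp (w : ℂ) : ‖Complex.exp (-Complex.I * f w)‖ = Real.exp (f w).im := by
    simp [Complex.norm_exp]
  have hexp : DiffContOnCl ℂ (fun w ↦ Complex.exp (-Complex.I * f w)) U :=
    (by fun_prop : Differentiable ℂ fun u ↦ Complex.exp (-Complex.I * u)).comp_diffContOnCl hf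
  have := Complex.norm_le_of_forall_mem_frontier_norm_le hU hexp (C := Real.exp C)
    (fun w hw ↦ by simpa only [norm_exp, Real.exp_le_exp] using hC w hw) hz
  rwa [norm_exp, Real.exp_le_exp] at this

theorem im_eq_zero_of_forall_mem_frontier (hU : Bornology.IsBounded U)
    (hf : DiffContOnCl ℂ f U) (h0 : ∀ z ∈ frontier U, (f z).im = 0) {z : ℂ}
    (hz : z ∈ closure U) : (f z).im = 0 := by
  have hle := hf.im_le_of_forall_mem_frontier_im_le hU (fun w hw ↦ (h0 w hw).le) hz
  have hge := hf.neg.im_le_of_forall_mem_frontier_im_le hU (C := 0)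
    (fun w hw ↦ by simp [h0 w hw]) hz
  simp only [Pi.neg_apply, Complex.neg_im, neg_nonpos] at hge
  exact le_antisymm hle hge

end DiffContOnCl

theorem AnalyticOnNhd.exists_eqOn_const_of_im_eq_zero {f : ℂ → ℂ} {U : Set ℂ}
    (hf : AnalyticOnNhd ℂ f U) (hUo : IsOpen U) (hUc : IsPreconnected U) (hUne : U.Nonempty)
    (him : ∀ z ∈ U, (f z).im = 0) : ∃ w, ∀ z ∈ U, f z = w := by
  refine (hf.is_constant_or_isOpen hUc).resolve_right fun hopen ↦ ?_
  have himage : Complex.im '' (f '' U) = {0} :=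
    ((hUne.image f).image _).subset_singleton_iff.mp <| by
      rintro _ ⟨_, ⟨z, hz, rfl⟩, rfl⟩
      exact him z hz
  have := Complex.isOpenMap_im _ (hopen U subset_rfl hUo)
  rw [himage] at this
  exact not_isOpen_singleton 0 this

theorem stmt_2_general (h : ℂ → ℂ) (U : Set ℂ)
    (hUD : closedBall (0 : ℂ) 1 ⊆ U) (hh : DifferentiableOn ℂ h U)
    (hreal : ∀ w : ℂ, ‖w‖ = 1 → (w * h w).im = 0) :
    ∀ z ∈ closedBall (0 : ℂ) 1, h z = 0 := by
  have hclosure : closure (ball (0 : ℂ) 1) = closedBall 0 1 := closure_ball 0 one_ne_zero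
  have hdiff : DifferentiableOn ℂ (fun w ↦ w * h w) (closedBall 0 1) :=
    differentiableOn_id.mul (hh.mono hUD)
  have him : ∀ z ∈ ball (0 : ℂ) 1, (z * h z).im = 0 := fun z hz ↦
    (hclosure ▸ hdiff).diffContOnCl.im_eq_zero_of_forall_mem_frontier isBounded_ball
      (fun w hw ↦ hreal w (by simpa [frontier_ball] using hw)) (subset_closure hz)
  obtain ⟨c, hc⟩ := ((hdiff.mono ball_subset_closedBall).analyticOnNhd isOpen_ball
    ).exists_eqOn_const_of_im_eq_zero isOpen_ball (convex_ball _ _).isPreconnected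
    ⟨0, mem_ball_self one_pos⟩ him
  have hmul : ∀ z ∈ ball (0 : ℂ) 1, z * h z = 0 := fun z hz ↦ by
    simpa [← hc 0 (mem_ball_self one_pos)] using hc z hz
  have hcont : ContinuousOn h (closedBall 0 1) := (hh.mono hUD).continuousOn
  have hpunct : h =ᶠ[𝓝[≠] 0] 0 := by
    filter_upwards [nhdsWithin_le_nhds (ball_mem_nhds 0 one_pos), self_mem_nhdsWithin]
      with z hz hne using (mul_eq_zero.mp (hmul z hz)).resolve_left hne
  have h0 : h 0 = 0 := (((hcont.continuousAt (closedBall_mem_nhds 0 one_pos)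
    ).eventuallyEq_nhds_iff_eventuallyEq_nhdsNE continuousAt_const).mp hpunct).eq_of_nhds
  have hball : EqOn h 0 (ball 0 1) := fun z hz ↦ by
    rcases eq_or_ne z 0 with rfl | hne
    · exact h0
    · exact (mul_eq_zero.mp (hmul z hz)).resolve_left hne
  exact hball.of_subset_closure hcont continuousOn_const ball_subset_closedBall hclosure.ge

/-- If `h` is holomorphic on a neighborhood of the closed unit disc and `w * h w` is
real for every `w` on the unit circle, then `h ≡ 0` on the closed unit disc. -/
theorem stmt_2 (h : ℂ → ℂ) (U : Set ℂ) (hUopen : IsOpen U)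
    (hUD : closedBall (0 : ℂ) 1 ⊆ U) (hh : DifferentiableOn ℂ h U)
    (hreal : ∀ w : ℂ, ‖w‖ = 1 → (w * h w).im = 0) :
    ∀ z ∈ closedBall (0 : ℂ) 1, h z = 0 :=
  stmt_2_general h U hUD hh hreal
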